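/- Let k be a field, H a Hopf algebra over k with bijective antipode S, and V a left Yetter-Drinfeld module over H with action (h,v) ↦ h·v and coaction δ(v) = v_{-1} ⊗ v_0. Then the linear map θ_V : V → V, v ↦ S(v_{-1})·v_0, is bijective with inverse v ↦ S^{-2}(v_{-1})·v_0, and for all h ∈ H and v ∈ V one has θ_V(h·v) = S²(h)·θ_V(v) and δ(θ_V(v)) = S²(v_{-1}) ⊗ θ_V(v_0). -/

import Mathlib

/-!
Since `S` is anti-multiplicative, the Yetter–Drinfeld condition gives
`θ(h·v) = S²(h₃) S(v₋₁) S(h₁) h₂ · v₀ = S²(h)·θ(v)`. Since `S` is also anti-comultiplicative,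
`Δ²(S x) = S x₃ ⊗ S x₂ ⊗ S x₁`, so with `x = v₋₁` the condition gives
`δ(θ v) = S(x₃) x₄ S²(x₁) ⊗ S(x₂)·v₀`, and `S(x₃) x₄ = ε(x₃)` collapses this to
`S²(v₋₁) ⊗ θ(v₀)`. By these two rules both composites of `θ` and `v ↦ S⁻²(v₋₁)·v₀` send `v` to
`v₋₁·θ(v₀) = v₋₁₁ S(v₋₁₂)·v₀ = v`.
-/

open TensorProduct

section

variable (k : Type*) [Field k] (H : Type*) [Ring H] [HopfAlgebra k H]
  (V : Type*) [AddCommGroup V] [Module k V]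

/-- The map `θ_V : V → V`, `v ↦ S(v₍₋₁₎)·v₍₀₎`, of a Yetter–Drinfeld module with
action `a` and coaction `δ`. -/
noncomputable def ydTheta (a : H →ₗ[k] V →ₗ[k] V) (δ : V →ₗ[k] H ⊗[k] V) :
    V →ₗ[k] V :=
  (TensorProduct.lift a) ∘ₗ
    (TensorProduct.map (HopfAlgebra.antipode (R := k)) LinearMap.id) ∘ₗ δ

/-- The map `V → V`, `v ↦ S⁻²(v₍₋₁₎)·v₍₀₎` (here `Sinv` is the inverse of the
antipode). -/
noncomputable def ydThetaInv (Sinv : H →ₗ[k] H)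
    (a : H →ₗ[k] V →ₗ[k] V) (δ : V →ₗ[k] H ⊗[k] V) : V →ₗ[k] V :=
  (TensorProduct.lift a) ∘ₗ (TensorProduct.map (Sinv ∘ₗ Sinv) LinearMap.id) ∘ₗ δ

end

open Coalgebra HopfAlgebra WithConv

namespace HopfAlgebra

variable {R A : Type*} [CommSemiring R] [Semiring A] [HopfAlgebra R A]

theorem comul_antipode (a : A) :
    comul (R := R) (antipode R a) =
      map (antipode R) (antipode R) (TensorProduct.comm R A A (comul (R := R) a)) := by
  let iL : A →ₐ[R] A ⊗[R] A := Algebra.TensorProduct.includeLeft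
  let iR : A →ₐ[R] A ⊗[R] A := Algebra.TensorProduct.includeRight
  have hS : ∀ i : A →ₐ[R] A ⊗[R] A,
      toConv (i.toLinearMap ∘ₗ antipode R) * toConv i.toLinearMap = 1 := fun i => by
    ext x
    simp [(ℛ R x).convMul_apply, ← map_mul, ← map_sum, sum_antipode_mul_eq_algebraMap_counit]
  have hcomul : toConv (comul (R := R) (A := A)) =
      toConv iL.toLinearMap * toConv iR.toLinearMap := by
    ext x
    simp [(ℛ R x).convMul_apply, iL, iR, Algebra.TensorProduct.tmul_mul_tmul, (ℛ R x).eq]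
  have hrev : toConv (map (antipode R) (antipode R) ∘ₗ
        (TensorProduct.comm R A A).toLinearMap ∘ₗ comul (R := R) (A := A)) =
      toConv (iR.toLinearMap ∘ₗ antipode R) * toConv (iL.toLinearMap ∘ₗ antipode R) := by
    ext x
    simp [(ℛ R x).convMul_apply, iL, iR, Algebra.TensorProduct.tmul_mul_tmul, ← (ℛ R x).eq]
  -- `(S ⊗ S) ∘ τ ∘ Δ` is a left and `Δ ∘ S` a right convolution inverse of `Δ = iL * iR`.
  have hleft : toConv (map (antipode R) (antipode R) ∘ₗ
        (TensorProduct.comm R A A).toLinearMap ∘ₗ comul (R := R) (A := A)) *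
      toConv (comul (R := R) (A := A)) = 1 := by
    rw [hrev, hcomul, mul_assoc, ← mul_assoc (toConv (iL.toLinearMap ∘ₗ _)), hS, one_mul, hS]
  exact (LinearMap.congr_fun
    (congrArg ofConv (left_inv_eq_right_inv hleft LinearMap.comul_right_inv)) a).symm

theorem map_comul_mul_antipode_comul (a : A) :
    map comul (LinearMap.mul' R A ∘ₗ (antipode R).rTensor A)
      (TensorProduct.assoc R A A A ((comul (R := R)).rTensor A (comul a))) = comul a ⊗ₜ 1 := by
  rw [coassoc_apply, LinearMap.lTensor, ← LinearMap.comp_apply (map _ _), ← map_comp,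
    LinearMap.comp_id, LinearMap.comp_assoc, mul_antipode_rTensor_comul]
  have h := congrArg (map comul (Algebra.linearMap R A)) (lTensor_counit_comul (R := R) a)
  rw [LinearMap.lTensor, ← LinearMap.comp_apply (map _ _), ← map_comp, LinearMap.comp_id,
    map_tmul] at h
  simpa using h

end HopfAlgebra

namespace TensorProduct

variable {R M N P : Type*} [CommSemiring R] [AddCommMonoid M] [Module R M] [AddCommMonoid N]
  [Module R N] [AddCommMonoid P] [Module R P]

theorem exists_fin_sum_tmul (x : M ⊗[R] N) :
    ∃ (n : ℕ) (m : Fin n → M) (m' : Fin n → N), x = ∑ i, m i ⊗ₜ[R] m' i := by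
  obtain ⟨s, rfl⟩ := exists_finset x
  refine ⟨s.card, fun i => (s.equivFin.symm i).1.1, fun i => (s.equivFin.symm i).1.2, ?_⟩
  rw [← Finset.sum_coe_sort s, ← s.equivFin.symm.sum_comp]

theorem exists_fin_sum_tmul_tmul (x : (M ⊗[R] N) ⊗[R] P) :
    ∃ (n : ℕ) (m : Fin n → M) (m' : Fin n → N) (p : Fin n → P),
      x = ∑ i, (m i ⊗ₜ[R] m' i) ⊗ₜ[R] p i := by
  obtain ⟨n, t, p, rfl⟩ := exists_fin_sum_tmul x
  choose l m m' ht using fun i => exists_fin_sum_tmul (t i)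
  let e := Fintype.equivFin ((i : Fin n) × Fin (l i))
  refine ⟨_, fun q => m _ (e.symm q).2, fun q => m' _ (e.symm q).2, fun q => p (e.symm q).1, ?_⟩
  simp_rw [ht, sum_tmul]
  rw [e.symm.sum_comp (fun q => (m q.1 q.2 ⊗ₜ m' q.1 q.2) ⊗ₜ p q.1), Fintype.sum_sigma]

end TensorProduct

section YetterDrinfeld

variable {k H V : Type*} [CommSemiring k] [Semiring H] [HopfAlgebra k H] [AddCommMonoid V]
  [Module k V] (ρ : H →ₐ[k] Module.End k V) (δ : V →ₗ[k] H ⊗[k] V)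

/-- Applied to `Δ²h ⊗ δv` this is the right-hand side `h₁ v₋₁ S(h₃) ⊗ h₂·v₀` of the
Yetter–Drinfeld condition. -/
noncomputable def ydRhs : ((H ⊗[k] H) ⊗[k] H) ⊗[k] (H ⊗[k] V) →ₗ[k] H ⊗[k] V :=
  map (LinearMap.mul' k H) (lift ρ.toLinearMap) ∘ₗ
    (tensorTensorTensorComm k H H H V).toLinearMap ∘ₗ
    map ((LinearMap.mul' k H).rTensor H ∘ₗ (TensorProduct.rightComm k H H H).toLinearMap)
      ((antipode k).rTensor V) ∘ₗ
    (tensorTensorTensorComm k (H ⊗[k] H) H H V).toLinearMap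

@[simp]
theorem ydRhs_tmul (x y z g : H) (w : V) :
    ydRhs ρ (((x ⊗ₜ y) ⊗ₜ z) ⊗ₜ (g ⊗ₜ w)) = (x * g * antipode k z) ⊗ₜ ρ y w :=
  rfl

def IsYetterDrinfeld : Prop :=
  ∀ h v, δ (ρ h v) = ydRhs ρ (comul.rTensor H (comul h) ⊗ₜ δ v)

theorem isYetterDrinfeld_of_forall_fin
    (hyd : ∀ (h : H) (v : V) (n : ℕ) (g : Fin n → H) (w : Fin n → V),
      δ v = ∑ i, g i ⊗ₜ[k] w i →
      ∀ (m : ℕ) (h₁ h₂ h₃ : Fin m → H),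
        comul.rTensor H (comul h) = ∑ j, (h₁ j ⊗ₜ[k] h₂ j) ⊗ₜ[k] h₃ j →
        δ (ρ h v) = ∑ j, ∑ i, (h₁ j * g i * antipode k (h₃ j)) ⊗ₜ[k] ρ (h₂ j) (w i)) :
    IsYetterDrinfeld ρ δ := by
  intro h v
  obtain ⟨n, g, w, hv⟩ := exists_fin_sum_tmul (δ v)
  obtain ⟨m, h₁, h₂, h₃, hh⟩ := exists_fin_sum_tmul_tmul (comul.rTensor H (comul (R := k) h))
  rw [hyd h v n g w hv m h₁ h₂ h₃ hh, hh, hv]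
  simp only [sum_tmul, tmul_sum, map_sum, ydRhs_tmul]
  exact Finset.sum_comm

theorem sum_act_antipode_act {y : H} {ι : Type*} (𝓡 : Repr k y ι) (w : V) :
    ∑ j ∈ 𝓡.index, ρ (antipode k (𝓡.left j)) (ρ (𝓡.right j) w) =
      counit (R := k) y • w := by
  simp_rw [← Module.End.mul_apply, ← map_mul, ← LinearMap.sum_apply, ← map_sum,
    sum_antipode_mul_eq_smul, map_smul, map_one, LinearMap.smul_apply, Module.End.one_apply]

theorem sum_act_act_antipode {y : H} {ι : Type*} (𝓡 : Repr k y ι) (w : V) :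
    ∑ j ∈ 𝓡.index, ρ (𝓡.left j) (ρ (antipode k (𝓡.right j)) w) =
      counit (R := k) y • w := by
  simp_rw [← Module.End.mul_apply, ← map_mul, ← LinearMap.sum_apply, ← map_sum,
    sum_mul_antipode_eq_smul, map_smul, map_one, LinearMap.smul_apply, Module.End.one_apply]

theorem lift_antipode_ydRhs (h g : H) (w : V) :
    lift ρ.toLinearMap ((antipode k).rTensor V
        (ydRhs ρ (comul.rTensor H (comul h) ⊗ₜ (g ⊗ₜ w)))) =
      ρ (antipode k (antipode k h)) (ρ (antipode k g) w) := by
  conv_rhs => rw [← sum_counit_smul (ℛ k h)]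
  rw [← (ℛ k h).eq]
  simp only [map_sum, sum_tmul, LinearMap.rTensor_tmul, map_smul, LinearMap.sum_apply,
    LinearMap.smul_apply]
  refine Finset.sum_congr rfl fun i _ => ?_
  rw [← (ℛ k _).eq]
  simp only [map_sum, sum_tmul, ydRhs_tmul, LinearMap.rTensor_tmul, lift.tmul,
    AlgHom.toLinearMap_apply, antipode_mul_antidistrib, map_mul, Module.End.mul_apply]
  rw [← map_sum, ← map_sum, sum_act_antipode_act, map_smul, map_smul]

variable {ρ δ}

theorem IsYetterDrinfeld.coaction_lift (hyd : IsYetterDrinfeld ρ δ) (u : H ⊗[k] V) :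
    δ (lift ρ.toLinearMap u) = ydRhs ρ (map (comul.rTensor H ∘ₗ comul) δ u) := by
  induction u with
  | zero => simp
  | tmul h v => exact hyd h v
  | add x y hx hy => simp only [map_add, hx, hy]

theorem ydRhs_rTensor_comul_antipode (t : H ⊗[k] V) :
    ydRhs ρ ((comul.rTensor H ∘ₗ comul ∘ₗ antipode k).rTensor (H ⊗[k] V)
        (TensorProduct.assoc k H H V (comul.rTensor V t))) =
      map (antipode k ∘ₗ antipode k) (lift ρ.toLinearMap ∘ₗ (antipode k).rTensor V)
        (TensorProduct.assoc k H H V (comul.rTensor V t)) := by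
  induction t with
  | zero => simp
  | add x y hx hy => simp only [map_add, hx, hy]
  | tmul x w =>
    let G : (H ⊗[k] H) ⊗[k] H →ₗ[k] H ⊗[k] V :=
      map (LinearMap.mul' k H ∘ₗ (TensorProduct.comm k H H).toLinearMap ∘ₗ
          (antipode k ∘ₗ antipode k).rTensor H) (ρ.toLinearMap.flip w ∘ₗ antipode k) ∘ₗ
        (TensorProduct.rightComm k H H H).toLinearMap
    have hG : ∀ p q m, G ((p ⊗ₜ q) ⊗ₜ m) =
        (m * antipode k (antipode k p)) ⊗ₜ ρ (antipode k q) w := fun _ _ _ => rfl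
    have hterm : ∀ y c : H, ydRhs ρ (comul.rTensor H (comul (antipode k y)) ⊗ₜ (c ⊗ₜ w)) =
        G (map comul (LinearMap.mul' k H ∘ₗ (antipode k).rTensor H)
          (TensorProduct.assoc k H H H (comul y ⊗ₜ c))) := by
      intro y c
      rw [← coassoc_symm_apply, comul_antipode, ← (ℛ k y).eq]
      simp only [map_sum, sum_tmul, TensorProduct.comm_tmul, map_tmul, LinearMap.lTensor_tmul,
        TensorProduct.assoc_tmul, comul_antipode]
      refine Finset.sum_congr rfl fun j _ => ?_
      rw [← (ℛ k _).eq]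
      simp only [map_sum, tmul_sum, sum_tmul, TensorProduct.comm_tmul, map_tmul,
        TensorProduct.assoc_symm_tmul, ydRhs_tmul, LinearMap.comp_apply, LinearMap.rTensor_tmul,
        LinearMap.mul'_apply, hG]
    calc _ = G (map comul (LinearMap.mul' k H ∘ₗ (antipode k).rTensor H)
            (TensorProduct.assoc k H H H (comul.rTensor H (comul x)))) := by
          simp only [LinearMap.rTensor_tmul]
          rw [← (ℛ k x).eq]
          simp only [map_sum, sum_tmul, TensorProduct.assoc_tmul, LinearMap.rTensor_tmul,
            LinearMap.comp_apply, hterm]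
      _ = G (comul x ⊗ₜ 1) := by rw [map_comul_mul_antipode_comul]
      _ = _ := by
          simp only [LinearMap.rTensor_tmul]
          rw [← (ℛ k x).eq]
          simp [map_sum, sum_tmul, hG]

end YetterDrinfeld

section YdTheta

variable {k H V : Type*} [Field k] [Ring H] [HopfAlgebra k H] [AddCommGroup V] [Module k V]
  {ρ : H →ₐ[k] Module.End k V} {δ : V →ₗ[k] H ⊗[k] V}

theorem ydTheta_eq (a : H →ₗ[k] V →ₗ[k] V) :
    ydTheta k H V a δ = (lift a ∘ₗ (antipode k).rTensor V) ∘ₗ δ :=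
  rfl

theorem IsYetterDrinfeld.ydTheta_act (hyd : IsYetterDrinfeld ρ δ) (h : H) (v : V) :
    ydTheta k H V ρ.toLinearMap δ (ρ h v) =
      ρ (antipode k (antipode k h)) (ydTheta k H V ρ.toLinearMap δ v) := by
  simp only [ydTheta_eq, LinearMap.comp_apply, hyd h v]
  induction δ v with
  | zero => simp
  | tmul g w => exact lift_antipode_ydRhs ρ h g w
  | add x y hx hy => simp only [tmul_add, map_add, hx, hy]

theorem IsYetterDrinfeld.ydTheta_lift (hyd : IsYetterDrinfeld ρ δ) (u : H ⊗[k] V) :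
    ydTheta k H V ρ.toLinearMap δ (lift ρ.toLinearMap u) =
      lift ρ.toLinearMap (map (antipode k ∘ₗ antipode k) (ydTheta k H V ρ.toLinearMap δ) u) := by
  induction u with
  | zero => simp
  | tmul h v => simpa using hyd.ydTheta_act h v
  | add x y hx hy => simp only [map_add, hx, hy]

theorem IsYetterDrinfeld.coaction_ydTheta (hyd : IsYetterDrinfeld ρ δ)
    (hδcoassoc : ∀ v, TensorProduct.assoc k H H V (comul.rTensor V (δ v)) = δ.lTensor H (δ v))
    (v : V) :
    δ (ydTheta k H V ρ.toLinearMap δ v) =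
      map (antipode k ∘ₗ antipode k) (ydTheta k H V ρ.toLinearMap δ) (δ v) :=
  calc δ (lift ρ.toLinearMap ((antipode k).rTensor V (δ v)))
      = ydRhs ρ ((comul.rTensor H ∘ₗ comul ∘ₗ antipode k).rTensor (H ⊗[k] V)
          (δ.lTensor H (δ v))) := by
        rw [hyd.coaction_lift, LinearMap.map_rTensor, ← LinearMap.rTensor_comp_lTensor,
          LinearMap.comp_apply, LinearMap.comp_assoc]
    _ = map (antipode k ∘ₗ antipode k) (lift ρ.toLinearMap ∘ₗ (antipode k).rTensor V)
          (δ.lTensor H (δ v)) := by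
        rw [← hδcoassoc, ydRhs_rTensor_comul_antipode]
    _ = _ := by rw [LinearMap.map_lTensor]; rfl

theorem lift_lTensor_ydTheta_coaction
    (hδcoassoc : ∀ v, TensorProduct.assoc k H H V (comul.rTensor V (δ v)) = δ.lTensor H (δ v))
    (hδcounit : ∀ v, TensorProduct.lid k V (counit.rTensor V (δ v)) = v) (v : V) :
    lift ρ.toLinearMap ((ydTheta k H V ρ.toLinearMap δ).lTensor H (δ v)) = v := by
  have hcontract : ∀ t : H ⊗[k] V,
      lift ρ.toLinearMap ((lift ρ.toLinearMap ∘ₗ (antipode k).rTensor V).lTensor H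
        (TensorProduct.assoc k H H V (comul.rTensor V t))) =
      TensorProduct.lid k V (counit.rTensor V t) := by
    intro t
    induction t with
    | zero => simp
    | add x y hx hy => simp only [map_add, hx, hy]
    | tmul x w =>
      simp only [LinearMap.rTensor_tmul]
      rw [← (ℛ k x).eq]
      simp only [sum_tmul, map_sum, TensorProduct.assoc_tmul, LinearMap.lTensor_tmul,
        LinearMap.comp_apply, LinearMap.rTensor_tmul, lift.tmul, AlgHom.toLinearMap_apply,
        TensorProduct.lid_tmul]
      exact sum_act_act_antipode ρ (ℛ k x) w
  rw [ydTheta_eq, LinearMap.lTensor_comp, LinearMap.comp_apply, ← hδcoassoc, hcontract, hδcounit]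

theorem IsYetterDrinfeld.ydTheta_ydThetaInv (hyd : IsYetterDrinfeld ρ δ)
    (hδcoassoc : ∀ v, TensorProduct.assoc k H H V (comul.rTensor V (δ v)) = δ.lTensor H (δ v))
    (hδcounit : ∀ v, TensorProduct.lid k V (counit.rTensor V (δ v)) = v)
    (Sinv : H →ₗ[k] H) (hSinv : ∀ h, antipode k (Sinv h) = h) (v : V) :
    ydTheta k H V ρ.toLinearMap δ (ydThetaInv k H V Sinv ρ.toLinearMap δ v) = v := by
  have hS : (antipode k ∘ₗ antipode k) ∘ₗ (Sinv ∘ₗ Sinv) = LinearMap.id :=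
    LinearMap.ext fun h => by simp [hSinv]
  rw [ydThetaInv, LinearMap.comp_apply, LinearMap.comp_apply, hyd.ydTheta_lift,
    ← LinearMap.comp_apply (map _ _), ← map_comp, hS, LinearMap.comp_id, ← LinearMap.lTensor_def,
    lift_lTensor_ydTheta_coaction hδcoassoc hδcounit]

theorem IsYetterDrinfeld.ydThetaInv_ydTheta (hyd : IsYetterDrinfeld ρ δ)
    (hδcoassoc : ∀ v, TensorProduct.assoc k H H V (comul.rTensor V (δ v)) = δ.lTensor H (δ v))
    (hδcounit : ∀ v, TensorProduct.lid k V (counit.rTensor V (δ v)) = v)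
    (Sinv : H →ₗ[k] H) (hSinv : ∀ h, Sinv (antipode k h) = h) (v : V) :
    ydThetaInv k H V Sinv ρ.toLinearMap δ (ydTheta k H V ρ.toLinearMap δ v) = v := by
  have hS : (Sinv ∘ₗ Sinv) ∘ₗ (antipode k ∘ₗ antipode k) = LinearMap.id :=
    LinearMap.ext fun h => by simp [hSinv]
  rw [ydThetaInv, LinearMap.comp_apply, LinearMap.comp_apply, hyd.coaction_ydTheta hδcoassoc,
    ← LinearMap.comp_apply (map _ _), ← map_comp, hS, LinearMap.id_comp, ← LinearMap.lTensor_def,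
    lift_lTensor_ydTheta_coaction hδcoassoc hδcounit]

end YdTheta

section

variable (k : Type*) [Field k] (H : Type*) [Ring H] [HopfAlgebra k H]
  (V : Type*) [AddCommGroup V] [Module k V]

/-- **Lemma.** For a Yetter–Drinfeld module `V` over a Hopf algebra `H` with
bijective antipode `S`, the map `θ_V : v ↦ S(v₍₋₁₎)·v₍₀₎` is bijective with
inverse `v ↦ S⁻²(v₍₋₁₎)·v₍₀₎`, and satisfies `θ_V(h·v) = S²(h)·θ_V(v)` and
`δ(θ_V(v)) = S²(v₍₋₁₎) ⊗ θ_V(v₍₀₎)`. -/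
theorem ydTheta_bijective_and_twist
    (Sinv : H →ₗ[k] H)
    (hSinv₁ : ∀ h : H, Sinv (HopfAlgebra.antipode (R := k) h) = h)
    (hSinv₂ : ∀ h : H, HopfAlgebra.antipode (R := k) (Sinv h) = h)
    (a : H →ₗ[k] V →ₗ[k] V) (δ : V →ₗ[k] H ⊗[k] V)
    -- `a` is a module structure
    (ha₁ : ∀ v : V, a 1 v = v)
    (hamul : ∀ (h h' : H) (v : V), a (h * h') v = a h (a h' v))
    -- `δ` is a coassociative counital comodule structure
    (hδcoassoc : ∀ v : V,
      (TensorProduct.assoc k H H V)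
          ((TensorProduct.map (Coalgebra.comul (R := k)) LinearMap.id) (δ v)) =
        (TensorProduct.map LinearMap.id δ) (δ v))
    (hδcounit : ∀ v : V,
      (TensorProduct.lid k V)
          ((TensorProduct.map (Coalgebra.counit (R := k)) LinearMap.id) (δ v)) = v)
    -- the Yetter–Drinfeld condition `δ(h·v) = h₍₁₎ v₍₋₁₎ S(h₍₃₎) ⊗ h₍₂₎·v₍₀₎`
    (hyd : ∀ (h : H) (v : V) (n : ℕ) (g : Fin n → H) (w : Fin n → V),
      δ v = ∑ i, g i ⊗ₜ[k] w i →
      ∀ (m : ℕ) (h₁ h₂ h₃ : Fin m → H),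
        (TensorProduct.map (Coalgebra.comul (R := k)) LinearMap.id)
            (Coalgebra.comul (R := k) h) = ∑ j, (h₁ j ⊗ₜ[k] h₂ j) ⊗ₜ[k] h₃ j →
        δ (a h v) = ∑ j, ∑ i,
          (h₁ j * g i * HopfAlgebra.antipode (R := k) (h₃ j)) ⊗ₜ[k] a (h₂ j) (w i)) :
    (∀ v : V, ydTheta k H V a δ (ydThetaInv k H V Sinv a δ v) = v) ∧
    (∀ v : V, ydThetaInv k H V Sinv a δ (ydTheta k H V a δ v) = v) ∧
    (∀ (h : H) (v : V),
      ydTheta k H V a δ (a h v) =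
        a (HopfAlgebra.antipode (R := k) (HopfAlgebra.antipode (R := k) h))
          (ydTheta k H V a δ v)) ∧
    (δ ∘ₗ ydTheta k H V a δ =
      (TensorProduct.map
          ((HopfAlgebra.antipode (R := k) : H →ₗ[k] H) ∘ₗ
            (HopfAlgebra.antipode (R := k) : H →ₗ[k] H))
          (ydTheta k H V a δ)) ∘ₗ δ) := by
  let ρ : H →ₐ[k] Module.End k V :=
    AlgHom.ofLinearMap a (LinearMap.ext ha₁) fun h h' => LinearMap.ext (hamul h h')
  have hyd' : IsYetterDrinfeld ρ δ := isYetterDrinfeld_of_forall_fin ρ δ hyd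
  exact ⟨hyd'.ydTheta_ydThetaInv hδcoassoc hδcounit Sinv hSinv₂,
    hyd'.ydThetaInv_ydTheta hδcoassoc hδcounit Sinv hSinv₁,
    hyd'.ydTheta_act, LinearMap.ext (hyd'.coaction_ydTheta hδcoassoc)⟩


end
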